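/- Foster's theorem for an embedded chain: Let S be a countable set, P a transition matrix on S, and τ : S → ℕ a function taking finitely many values, all positive integers, with τ(i) ≤ T_max for all i. Define the random times t_0 = 0, t_{n+1} = t_n + τ(Z_{t_n}), and the embedded chain Z̃_n = Z_{t_n}. Suppose there exist ε > 0, a finite subset V ⊆ S and a function f : S → ℝ bounded below such that (i) E(f(Z̃_{n+1}) − f(Z̃_n) | Z̃_n = i) ≤ −ε for every i ∈ S \ V, and (ii) E(f(Z̃_{n+1}) | Z̃_n = i) < ∞ for every i ∈ V. Then for every initial state i ∈ S, the expected first hitting time E_i[τ_V] of the set V by the original Markov chain (Z_n) is finite. -/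

import Mathlib

open scoped ENNReal Classical

/-- `nStep P n i j` is the `n`-step transition probability of the Markov chain with
one-step transition matrix `P`. -/
noncomputable def nStep {S : Type*} (P : S → S → ℝ) : ℕ → S → S → ℝ
  | 0, i, j => if i = j then 1 else 0
  | n + 1, i, j => ∑' k : S, P i k * nStep P n k j

/-- `avoidProb P V n i` is the probability that the Markov chain with transition
matrix `P` started at `i` avoids the set `V` at all times `1, …, n`,
i.e. `ℙ_i(τ_V > n)` where `τ_V = inf {n ≥ 1 : Z_n ∈ V}` is the first hitting
time of `V`. -/
noncomputable def avoidProb {S : Type*} (P : S → S → ℝ) (V : Set S) : ℕ → S → ℝ≥0∞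
  | 0, _ => 1
  | n + 1, i =>
      ∑' j : S, Set.indicator Vᶜ (fun j => ENNReal.ofReal (P i j) * avoidProb P V n j) j

/-- The expected first hitting time `E_i[τ_V] = ∑_{n ≥ 0} ℙ_i(τ_V > n)` of the set `V`
by the Markov chain with transition matrix `P` started at `i`. -/
noncomputable def expHittingTime {S : Type*} (P : S → S → ℝ) (V : Set S) (i : S) : ℝ≥0∞ :=
  ∑' n : ℕ, avoidProb P V n i


/-!
Sampling the original chain at the times `Tmax * n`: since avoidance probabilities decrease in
time and the embedded chain moves at most `Tmax` steps at a time, `ℙ_i(τ_V > Tmax * n)` is at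
most the probability that the embedded chain avoids `V` for `n` steps, so
`E_i[τ_V] ≤ Tmax · Ẽ_i[τ̃_V]`. For the embedded chain this is Foster's argument in `ℝ≥0∞`:
with `g = f - m ≥ 0` the drift condition gives, by induction on `N`,
`ε · ∑_{n<N} ℙ_i(τ̃_V > n) ≤ g(i)` off `V`, and one step from any `i` then bounds
`ε · Ẽ_i[τ̃_V]` by `ε + E g(Z̃_1)`.
-/

open Finset

section

variable {S : Type*}

section RealToENNReal

variable {p g : S → ℝ}

lemma hasSum_one_iff_tsum_ofReal_eq_one (hp : ∀ j, 0 ≤ p j) :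
    HasSum p 1 ↔ ∑' j, ENNReal.ofReal (p j) = 1 := by
  constructor
  · intro h
    rw [← ENNReal.ofReal_tsum_of_nonneg hp h.summable, h.tsum_eq, ENNReal.ofReal_one]
  · intro h
    have hs : Summable p :=
      (ENNReal.summable_toReal (h ▸ ENNReal.one_ne_top)).congr fun j => ENNReal.toReal_ofReal (hp j)
    rw [← ENNReal.ofReal_tsum_of_nonneg hp hs, ENNReal.ofReal_eq_one] at h
    exact h ▸ hs.hasSum

lemma ofReal_tsum_mul (hp : ∀ k, 0 ≤ p k) (hg : ∀ k, 0 ≤ g k)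
    (hs : Summable fun k => p k * g k) :
    ENNReal.ofReal (∑' k, p k * g k) = ∑' k, ENNReal.ofReal (p k) * ENNReal.ofReal (g k) := by
  rw [ENNReal.ofReal_tsum_of_nonneg (fun k => mul_nonneg (hp k) (hg k)) hs]
  exact tsum_congr fun k => ENNReal.ofReal_mul (hp k)

lemma ofReal_tsum_mul_of_le_one (hp : ∀ k, 0 ≤ p k) (hps : Summable p) (hg : ∀ k, 0 ≤ g k)
    (hg1 : ∀ k, g k ≤ 1) :
    ENNReal.ofReal (∑' k, p k * g k) = ∑' k, ENNReal.ofReal (p k) * ENNReal.ofReal (g k) :=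
  ofReal_tsum_mul hp hg <| hps.of_nonneg_of_le (fun k => mul_nonneg (hp k) (hg k))
    fun k => mul_le_of_le_one_right (hp k) (hg1 k)

lemma hasSum_mul_sub (hp : HasSum p 1) (hs : Summable fun j => p j * g j) (m : ℝ) :
    HasSum (fun j => p j * (g j - m)) (∑' j, p j * g j - m) := by
  simpa [mul_sub] using hs.hasSum.sub (hp.mul_right m)

end RealToENNReal

section nStep

variable {P : S → S → ℝ}

lemma nStep_one (P : S → S → ℝ) (i j : S) : nStep P 1 i j = P i j := by
  simp [nStep]

lemma nStep_nonneg (hP0 : ∀ i j, 0 ≤ P i j) (n : ℕ) (i j : S) : 0 ≤ nStep P n i j := by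
  induction n generalizing i with
  | zero => simp only [nStep]; split_ifs <;> norm_num
  | succ n ih => exact tsum_nonneg fun k => mul_nonneg (hP0 i k) (ih k)

theorem hasSum_nStep (hP0 : ∀ i j, 0 ≤ P i j) (hP1 : ∀ i, HasSum (P i) 1) (n : ℕ) (i : S) :
    HasSum (nStep P n i) 1 := by
  induction n generalizing i with
  | zero => simpa [nStep, eq_comm] using hasSum_ite_eq i (1 : ℝ)
  | succ n ih =>
    have hrow k := (hasSum_one_iff_tsum_ofReal_eq_one (nStep_nonneg hP0 n k)).1 (ih k)
    rw [hasSum_one_iff_tsum_ofReal_eq_one (nStep_nonneg hP0 _ i)]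
    calc ∑' j, ENNReal.ofReal (nStep P (n + 1) i j)
        = ∑' j, ∑' k, ENNReal.ofReal (P i k) * ENNReal.ofReal (nStep P n k j) :=
          tsum_congr fun j => ofReal_tsum_mul_of_le_one (hP0 i) (hP1 i).summable
            (fun k => nStep_nonneg hP0 n k j)
            (fun k => le_hasSum (ih k) j fun l _ => nStep_nonneg hP0 n k l)
      _ = ∑' k, ENNReal.ofReal (P i k) * ∑' j, ENNReal.ofReal (nStep P n k j) := by
          rw [ENNReal.tsum_comm]
          simp_rw [ENNReal.tsum_mul_left]
      _ = 1 := by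
          simp_rw [hrow, mul_one]
          exact (hasSum_one_iff_tsum_ofReal_eq_one (hP0 i)).1 (hP1 i)

lemma ofReal_nStep_succ (hP0 : ∀ i j, 0 ≤ P i j) (hP1 : ∀ i, HasSum (P i) 1) (n : ℕ)
    (i j : S) :
    ENNReal.ofReal (nStep P (n + 1) i j)
      = ∑' k, ENNReal.ofReal (P i k) * ENNReal.ofReal (nStep P n k j) :=
  ofReal_tsum_mul_of_le_one (hP0 i) (hP1 i).summable (fun k => nStep_nonneg hP0 n k j)
    fun k => le_hasSum (hasSum_nStep hP0 hP1 n k) j fun l _ => nStep_nonneg hP0 n k l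

end nStep

section avoidProb

variable {P : S → S → ℝ} {V : Set S}

lemma avoidProb_succ (P : S → S → ℝ) (V : Set S) (n : ℕ) (i : S) :
    avoidProb P V (n + 1) i = ∑' j : ↥Vᶜ, ENNReal.ofReal (P i j) * avoidProb P V n j :=
  (tsum_subtype Vᶜ _).symm

lemma avoidProb_le_one (hP0 : ∀ i j, 0 ≤ P i j) (hP1 : ∀ i, HasSum (P i) 1) (n : ℕ) (i : S) :
    avoidProb P V n i ≤ 1 := by
  induction n generalizing i with
  | zero => exact le_rfl
  | succ n ih =>
    calc avoidProb P V (n + 1) i ≤ ∑' j : ↥Vᶜ, ENNReal.ofReal (P i j) := by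
          rw [avoidProb_succ]
          exact ENNReal.tsum_le_tsum fun j => mul_le_of_le_one_right' (ih j)
      _ ≤ ∑' j, ENNReal.ofReal (P i j) :=
          ENNReal.tsum_comp_le_tsum_of_injective Subtype.val_injective _
      _ = 1 := (hasSum_one_iff_tsum_ofReal_eq_one (hP0 i)).1 (hP1 i)

lemma avoidProb_antitone (hP0 : ∀ i j, 0 ≤ P i j) (hP1 : ∀ i, HasSum (P i) 1) (i : S) :
    Antitone fun n => avoidProb P V n i := by
  suffices h : ∀ n i, avoidProb P V (n + 1) i ≤ avoidProb P V n i from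
    antitone_nat_of_succ_le fun n => h n i
  intro n
  induction n with
  | zero => exact avoidProb_le_one hP0 hP1 1
  | succ n ih =>
    intro i
    rw [avoidProb_succ, avoidProb_succ]
    gcongr with j
    exact ih j

lemma avoidProb_add_le (hP0 : ∀ i j, 0 ≤ P i j) (hP1 : ∀ i, HasSum (P i) 1) {k : ℕ}
    (hk : 0 < k) (m : ℕ) (i : S) :
    avoidProb P V (k + m) i ≤ ∑' j : ↥Vᶜ, ENNReal.ofReal (nStep P k i j) * avoidProb P V m j := by
  induction k, hk using Nat.le_induction generalizing i with
  | base => simp_rw [add_comm 1 m, avoidProb_succ, nStep_one, le_rfl]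
  | succ k _ ih =>
    calc avoidProb P V (k + 1 + m) i
        = ∑' j : ↥Vᶜ, ENNReal.ofReal (P i j) * avoidProb P V (k + m) j := by
          rw [add_right_comm, avoidProb_succ]
      _ ≤ ∑' j : ↥Vᶜ, ENNReal.ofReal (P i j) *
            ∑' l : ↥Vᶜ, ENNReal.ofReal (nStep P k j l) * avoidProb P V m l := by
          gcongr with j
          exact ih j
      _ ≤ ∑' j, ENNReal.ofReal (P i j) *
            ∑' l : ↥Vᶜ, ENNReal.ofReal (nStep P k j l) * avoidProb P V m l :=
          ENNReal.tsum_comp_le_tsum_of_injective Subtype.val_injective _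
      _ = ∑' l : ↥Vᶜ, ENNReal.ofReal (nStep P (k + 1) i l) * avoidProb P V m l := by
          simp_rw [ofReal_nStep_succ hP0 hP1, ← ENNReal.tsum_mul_right, ← ENNReal.tsum_mul_left,
            mul_assoc]
          exact ENNReal.tsum_comm

end avoidProb

lemma Antitone.tsum_le_mul_tsum_mul {a : ℕ → ℝ≥0∞} (ha : Antitone a) {T : ℕ} (hT : 0 < T) :
    ∑' n, a n ≤ T * ∑' n, a (T * n) := by
  have : NeZero T := ⟨hT.ne'⟩
  calc ∑' n, a n = ∑' q : ℕ × Fin T, a (q.1 * T + q.2) :=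
        ((Nat.divModEquiv T).symm.tsum_eq a).symm
    _ ≤ ∑' q : ℕ × Fin T, a (T * q.1) :=
        ENNReal.tsum_le_tsum fun q => ha (by rw [mul_comm]; exact Nat.le_add_right _ _)
    _ = ∑' n, ∑' _ : Fin T, a (T * n) :=
        ENNReal.tsum_prod (f := fun n _ => a (T * n))
    _ = T * ∑' n, a (T * n) := by simp [ENNReal.tsum_mul_left]

/-- The transition matrix of the embedded chain `Z̃_n = Z_{t_n}`, `t_{n+1} = t_n + τ(Z_{t_n})`. -/
noncomputable def embeddedMatrix (P : S → S → ℝ) (τ : S → ℕ) (i j : S) : ℝ :=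
  nStep P (τ i) i j

section embedded

variable {P : S → S → ℝ} {τ : S → ℕ} {T : ℕ} {V : Set S}

lemma avoidProb_mul_le_avoidProb_embeddedMatrix (hP0 : ∀ i j, 0 ≤ P i j)
    (hP1 : ∀ i, HasSum (P i) 1) (hτpos : ∀ i, 0 < τ i) (hτT : ∀ i, τ i ≤ T) (n : ℕ) (i : S) :
    avoidProb P V (T * n) i ≤ avoidProb (embeddedMatrix P τ) V n i := by
  induction n generalizing i with
  | zero => exact le_rfl
  | succ n ih =>
    calc avoidProb P V (T * (n + 1)) i ≤ avoidProb P V (τ i + T * n) i :=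
          avoidProb_antitone hP0 hP1 i (by rw [mul_add_one, add_comm]; gcongr; exact hτT i)
      _ ≤ ∑' j : ↥Vᶜ, ENNReal.ofReal (nStep P (τ i) i j) * avoidProb P V (T * n) j :=
          avoidProb_add_le hP0 hP1 (hτpos i) _ i
      _ ≤ avoidProb (embeddedMatrix P τ) V (n + 1) i := by
          rw [avoidProb_succ]
          exact ENNReal.tsum_le_tsum fun j => mul_le_mul_right (ih j) _

theorem expHittingTime_le_mul_expHittingTime_embeddedMatrix (hP0 : ∀ i j, 0 ≤ P i j)
    (hP1 : ∀ i, HasSum (P i) 1) (hτpos : ∀ i, 0 < τ i) (hτT : ∀ i, τ i ≤ T) (i : S) :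
    expHittingTime P V i ≤ T * expHittingTime (embeddedMatrix P τ) V i :=
  calc expHittingTime P V i ≤ T * ∑' n, avoidProb P V (T * n) i :=
        (avoidProb_antitone hP0 hP1 i).tsum_le_mul_tsum_mul ((hτpos i).trans_le (hτT i))
    _ ≤ T * ∑' n, avoidProb (embeddedMatrix P τ) V n i := by
        gcongr with n
        exact avoidProb_mul_le_avoidProb_embeddedMatrix hP0 hP1 hτpos hτT n i

end embedded

section Foster

variable {Q : S → S → ℝ} {V : Set S} {G : S → ℝ≥0∞} {c : ℝ≥0∞}

lemma sum_range_succ_avoidProb (Q : S → S → ℝ) (V : Set S) (N : ℕ) (i : S) :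
    ∑ n ∈ range (N + 1), avoidProb Q V n i
      = 1 + ∑' j : ↥Vᶜ, ENNReal.ofReal (Q i j) * ∑ n ∈ range N, avoidProb Q V n j := by
  rw [sum_range_succ', add_comm]
  simp_rw [avoidProb_succ, mul_sum]
  rw [Summable.tsum_finsetSum fun _ _ => ENNReal.summable]
  rfl

lemma expHittingTime_eq_one_add (Q : S → S → ℝ) (V : Set S) (i : S) :
    expHittingTime Q V i
      = 1 + ∑' j : ↥Vᶜ, ENNReal.ofReal (Q i j) * expHittingTime Q V j := by
  rw [expHittingTime, tsum_eq_zero_add' ENNReal.summable]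
  simp_rw [avoidProb_succ, expHittingTime, ← ENNReal.tsum_mul_left]
  rw [ENNReal.tsum_comm]
  rfl

variable (hdrift : ∀ i ∉ V, ∑' j, ENNReal.ofReal (Q i j) * G j + c ≤ G i)
include hdrift

lemma mul_sum_range_avoidProb_le (N : ℕ) {i : S} (hi : i ∉ V) :
    c * ∑ n ∈ range N, avoidProb Q V n i ≤ G i := by
  induction N generalizing i with
  | zero => simp
  | succ N ih =>
    calc c * ∑ n ∈ range (N + 1), avoidProb Q V n i
        = c + ∑' j : ↥Vᶜ, ENNReal.ofReal (Q i j) * (c * ∑ n ∈ range N, avoidProb Q V n j) := by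
          simp_rw [sum_range_succ_avoidProb, mul_add, mul_one, ← ENNReal.tsum_mul_left,
            mul_left_comm]
      _ ≤ c + ∑' j : ↥Vᶜ, ENNReal.ofReal (Q i j) * G j := by
          gcongr with j
          exact ih j.2
      _ ≤ c + ∑' j, ENNReal.ofReal (Q i j) * G j := by
          gcongr
          exact ENNReal.tsum_comp_le_tsum_of_injective Subtype.val_injective _
      _ ≤ G i := by
          rw [add_comm]
          exact hdrift i hi

lemma mul_expHittingTime_le_of_notMem {i : S} (hi : i ∉ V) :
    c * expHittingTime Q V i ≤ G i := by
  rw [expHittingTime, ENNReal.tsum_eq_iSup_nat, ENNReal.mul_iSup]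
  exact iSup_le fun N => mul_sum_range_avoidProb_le hdrift N hi

theorem mul_expHittingTime_le (i : S) :
    c * expHittingTime Q V i ≤ c + ∑' j, ENNReal.ofReal (Q i j) * G j :=
  calc c * expHittingTime Q V i
      = c + ∑' j : ↥Vᶜ, ENNReal.ofReal (Q i j) * (c * expHittingTime Q V j) := by
        rw [expHittingTime_eq_one_add, mul_add, mul_one, ← ENNReal.tsum_mul_left]
        simp_rw [mul_left_comm]
    _ ≤ c + ∑' j : ↥Vᶜ, ENNReal.ofReal (Q i j) * G j := by
        gcongr with j
        exact mul_expHittingTime_le_of_notMem hdrift j.2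
    _ ≤ c + ∑' j, ENNReal.ofReal (Q i j) * G j := by
        gcongr
        exact ENNReal.tsum_comp_le_tsum_of_injective Subtype.val_injective _

end Foster

theorem expHittingTime_lt_top_of_drift {Q : S → S → ℝ} {V : Set S} (hQ0 : ∀ i j, 0 ≤ Q i j)
    (hQ1 : ∀ i, HasSum (Q i) 1) {ε : ℝ} (hε : 0 < ε) {f : S → ℝ} {m : ℝ} (hfm : ∀ i, m ≤ f i)
    (hdrift : ∀ i ∉ V, Summable (fun j => Q i j * f j) ∧ ∑' j, Q i j * f j ≤ f i - ε)
    (hfin : ∀ i ∈ V, Summable fun j => Q i j * f j) (i : S) :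
    expHittingTime Q V i < ⊤ := by
  have hg j : 0 ≤ f j - m := sub_nonneg.2 (hfm j)
  have hrow i (hs : Summable fun j => Q i j * f j) :
      ∑' j, ENNReal.ofReal (Q i j) * ENNReal.ofReal (f j - m)
        = ENNReal.ofReal (∑' j, Q i j * f j - m) := by
    have h := hasSum_mul_sub (hQ1 i) hs m
    rw [← h.tsum_eq, ofReal_tsum_mul (hQ0 i) hg h.summable]
  have hdrift' : ∀ i ∉ V, ∑' j, ENNReal.ofReal (Q i j) * ENNReal.ofReal (f j - m)
      + ENNReal.ofReal ε ≤ ENNReal.ofReal (f i - m) := by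
    intro i hi
    obtain ⟨hs, hle⟩ := hdrift i hi
    have hnn := (hasSum_mul_sub (hQ1 i) hs m).nonneg fun j => mul_nonneg (hQ0 i j) (hg j)
    rw [hrow i hs, ← ENNReal.ofReal_add hnn hε.le]
    exact ENNReal.ofReal_le_ofReal (by linarith)
  have hs : Summable fun j => Q i j * f j := by
    by_cases hi : i ∈ V
    exacts [hfin i hi, (hdrift i hi).1]
  refine ENNReal.lt_top_of_mul_ne_top_right (ne_top_of_le_ne_top ?_
    (mul_expHittingTime_le hdrift' i)) (ENNReal.ofReal_pos.2 hε).ne'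
  rw [hrow i hs]
  exact ENNReal.add_ne_top.2 ⟨ENNReal.ofReal_ne_top, ENNReal.ofReal_ne_top⟩

end

theorem foster_embedded_general {S : Type*}
    (P : S → S → ℝ)
    (hP0 : ∀ i j, 0 ≤ P i j)
    (hP1 : ∀ i, HasSum (P i) 1)
    (τ : S → ℕ) (Tmax : ℕ)
    (hτpos : ∀ i, 0 < τ i)
    (hτbd : ∀ i, τ i ≤ Tmax)
    (ε : ℝ) (hε : 0 < ε)
    (V : Set S)
    (f : S → ℝ) (m : ℝ) (hfm : ∀ i, m ≤ f i)
    (hdrift : ∀ i ∉ V, Summable (fun j => nStep P (τ i) i j * f j) ∧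
      (∑' j : S, nStep P (τ i) i j * f j) ≤ f i - ε)
    (hfin : ∀ i ∈ V, Summable (fun j => nStep P (τ i) i j * f j)) :
    ∀ i : S, expHittingTime P V i < ⊤ := by
  intro i
  have hQ0 : ∀ i j, 0 ≤ embeddedMatrix P τ i j := fun i => nStep_nonneg hP0 (τ i) i
  have hQ1 : ∀ i, HasSum (embeddedMatrix P τ i) 1 := fun i => hasSum_nStep hP0 hP1 (τ i) i
  calc expHittingTime P V i ≤ Tmax * expHittingTime (embeddedMatrix P τ) V i :=
        expHittingTime_le_mul_expHittingTime_embeddedMatrix hP0 hP1 hτpos hτbd i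
    _ < ⊤ := ENNReal.mul_lt_top (ENNReal.natCast_lt_top Tmax)
        (expHittingTime_lt_top_of_drift hQ0 hQ1 hε hfm hdrift hfin i)

/-- **Foster's theorem for an embedded chain.** Let `P` be a transition matrix on a
countable set `S`, and `τ : S → ℕ` a step-size function taking finitely many values,
all positive and bounded by `Tmax`.  The embedded chain `Z̃_n = Z_{t_n}`
(where `t_0 = 0`, `t_{n+1} = t_n + τ(Z_{t_n})`) is a Markov chain whose transition
matrix is `i j ↦ nStep P (τ i) i j`, so that
`E(f(Z̃_{n+1}) | Z̃_n = i) = ∑_j nStep P (τ i) i j * f j`.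
If there are `ε > 0`, a finite `V ⊆ S` and `f : S → ℝ` bounded below with
drift at most `-ε` outside `V` for the embedded chain and finite one-step
expectation on `V`, then the expected first hitting time of `V` by the original
chain is finite from every initial state. -/
theorem foster_embedded {S : Type*} [Countable S]
    (P : S → S → ℝ)
    (hP0 : ∀ i j, 0 ≤ P i j)
    (hP1 : ∀ i, HasSum (P i) 1)
    (τ : S → ℕ) (Tmax : ℕ)
    (hτpos : ∀ i, 0 < τ i)
    (hτbd : ∀ i, τ i ≤ Tmax)
    (hτfin : (Set.range τ).Finite)
    (ε : ℝ) (hε : 0 < ε)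
    (V : Set S) (hV : V.Finite)
    (f : S → ℝ) (m : ℝ) (hfm : ∀ i, m ≤ f i)
    (hdrift : ∀ i ∉ V, Summable (fun j => nStep P (τ i) i j * f j) ∧
      (∑' j : S, nStep P (τ i) i j * f j) ≤ f i - ε)
    (hfin : ∀ i ∈ V, Summable (fun j => nStep P (τ i) i j * f j)) :
    ∀ i : S, expHittingTime P V i < ⊤ :=
  foster_embedded_general P hP0 hP1 τ Tmax hτpos hτbd ε hε V f m hfm hdrift hfin
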